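/- Let q ∈ ℕ and z ∈ ℤ⁴ with z ≠ 0 and ‖z‖_∞ ≥ 2^{q−1}. Then ‖L^{−1}·z − 𝐿̃^{−1}(z)‖_∞ ≤ (5/2)·ε_q·‖z‖_∞, where ε_q = 2^{1−q}; moreover, for every z ∈ ℤ⁴ one has the absolute bound ‖L^{−1}·z − 𝐿̃^{−1}(z)‖_∞ ≤ 5/2. -/
import Mathlib


/-- Floor division by 2, modeling a one-bit right shift of a two's complement integer. -/
def rr (p : ℤ) : ℤ := ⌊(p : ℚ) / 2⌋

/-- The inverse ZFP transform matrix `L⁻¹`. -/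
noncomputable def Linv : Matrix (Fin 4) (Fin 4) ℝ :=
  (1 / 4 : ℝ) • !![4, 6, -4, -1; 4, 2, 4, 5; 4, -2, 4, -5; 4, -6, -4, 1]

/-- The lossy backward transform `𝐿̃⁻¹ : ℤ⁴ → ℤ⁴` of ZFP, executed step by step. -/
def LtildeInv (a : Fin 4 → ℤ) : Fin 4 → ℤ :=
  let a1 := a 0
  let a2 := a 1
  let a3 := a 2
  let a4 := a 3
  let a2 := a2 + rr a4
  let a4 := a4 - rr a2
  let a2 := a2 + a4
  let a4 := 2 * a4
  let a4 := a4 - a2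
  let a3 := a3 + a1
  let a1 := 2 * a1
  let a1 := a1 - a3
  let a2 := a2 + a3
  let a3 := 2 * a3
  let a3 := a3 - a2
  let a4 := a4 + a1
  let a1 := 2 * a1
  let a1 := a1 - a4
  ![a1, a2, a3, a4]

lemma rr_bounds (p : ℤ) : 2 * rr p ≤ p ∧ p ≤ 2 * rr p + 1 := by
  have h1 : (rr p : ℚ) ≤ (p : ℚ) / 2 := Int.floor_le _
  have h2 : (p : ℚ) / 2 < rr p + 1 := Int.lt_floor_add_one _
  constructor
  · exact_mod_cast (by push_cast; linarith : ((2 * rr p : ℤ) : ℚ) ≤ (p : ℚ))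
  · have h3 : ((p : ℤ) : ℚ) < ((2 * rr p + 2 : ℤ) : ℚ) := by push_cast; linarith
    have : p < 2 * rr p + 2 := by exact_mod_cast h3
    omega

lemma abs_bound (w : Fin 4 → ℤ) :
    ‖Linv.mulVec (fun i => (w i : ℝ)) - (fun i => ((LtildeInv w) i : ℝ))‖ ≤ 5 / 2 := by
  obtain ⟨h1, h2⟩ := rr_bounds (w 3)
  obtain ⟨h3, h4⟩ := rr_bounds (w 1 + rr (w 3))
  have r1 : (2 * rr (w 3) : ℝ) ≤ (w 3 : ℝ) := by exact_mod_cast h1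
  have r2 : (w 3 : ℝ) ≤ 2 * rr (w 3) + 1 := by exact_mod_cast h2
  have r3 : (2 * rr (w 1 + rr (w 3)) : ℝ) ≤ (w 1 : ℝ) + rr (w 3) := by exact_mod_cast h3
  have r4 : (w 1 : ℝ) + rr (w 3) ≤ 2 * rr (w 1 + rr (w 3)) + 1 := by exact_mod_cast h4
  rw [pi_norm_le_iff_of_nonneg (by norm_num)]
  intro i
  fin_cases i <;>
    simp [Linv, LtildeInv, Matrix.mulVec, dotProduct, Fin.sum_univ_four,
      Real.norm_eq_abs, abs_le] <;>
    constructor <;> linarith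

/-- Error bounds for the lossy backward transform: if `z ∈ ℤ⁴`, `z ≠ 0`, and
`‖z‖_∞ ≥ 2^{q−1}`, then `‖L⁻¹·z − 𝐿̃⁻¹(z)‖_∞ ≤ (5/2)·ε_q·‖z‖_∞` with `ε_q = 2^{1−q}`;
moreover, for every `z ∈ ℤ⁴` one has the absolute bound `‖L⁻¹·z − 𝐿̃⁻¹(z)‖_∞ ≤ 5/2`. -/
theorem ltildeInv_error (q : ℕ) (z : Fin 4 → ℤ) (hz : z ≠ 0)
    (hnorm : (2 : ℝ) ^ ((q : ℤ) - 1) ≤ ‖(fun i => (z i : ℝ))‖) :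
    ‖Linv.mulVec (fun i => (z i : ℝ)) - (fun i => ((LtildeInv z) i : ℝ))‖ ≤
      (5 / 2) * 2 ^ (1 - (q : ℤ)) * ‖(fun i => (z i : ℝ))‖ ∧
    ∀ w : Fin 4 → ℤ,
      ‖Linv.mulVec (fun i => (w i : ℝ)) - (fun i => ((LtildeInv w) i : ℝ))‖ ≤ 5 / 2 := by
  refine ⟨?_, fun w => abs_bound w⟩
  have hb := abs_bound z
  have hpow : (0 : ℝ) < (2 : ℝ) ^ (1 - (q : ℤ)) := by positivity
  have hkey : (2 : ℝ) ^ (1 - (q : ℤ)) * (2 : ℝ) ^ ((q : ℤ) - 1) = 1 := by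
    rw [← zpow_add₀ (by norm_num : (2:ℝ) ≠ 0)]
    norm_num
  calc ‖Linv.mulVec (fun i => (z i : ℝ)) - (fun i => ((LtildeInv z) i : ℝ))‖
      ≤ 5 / 2 := hb
    _ = 5 / 2 * ((2 : ℝ) ^ (1 - (q : ℤ)) * (2 : ℝ) ^ ((q : ℤ) - 1)) := by rw [hkey]; ring
    _ ≤ 5 / 2 * 2 ^ (1 - (q : ℤ)) * ‖(fun i => (z i : ℝ))‖ := by
        rw [mul_assoc]
        gcongr
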